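/- Let A be a ⊖-algebra, and let x, y be prime ideals of A with (x,y) ∈ dom(⋆). Then x ⋆ y is the greatest lower bound, in the set of prime ideals of A ordered by inclusion, of the set {x + w | w a prime ideal of A with (x,w) ∈ dom(+) and w ⊈ y}; in particular, x ⋆ y ⊆ x + w for every prime ideal w with (x,w) ∈ dom(+) and w ⊈ y, and x ⋆ y equals the intersection of all such x + w. -/
import Mathlib


class OminusAlgebra (A : Type*) extends DistribLattice A, BoundedOrder A where
  ominus : A → A → A
  inf_ominus : ∀ a b c : A, ominus (a ⊓ b) c = ominus a c ⊓ ominus b c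
  sup_ominus : ∀ a b c : A, ominus (a ⊔ b) c = ominus a c ⊔ ominus b c
  ominus_inf : ∀ a b c : A, ominus a (b ⊓ c) = ominus a b ⊔ ominus a c
  ominus_sup : ∀ a b c : A, ominus a (b ⊔ c) = ominus a b ⊓ ominus a c
  bot_ominus : ∀ a : A, ominus ⊥ a = ⊥
  ominus_top : ∀ a : A, ominus a ⊤ = ⊥
  ominus_bot : ∀ a : A, ominus a ⊥ = a

infixl:65 " ⊖ " => OminusAlgebra.ominus

variable {A : Type*} [OminusAlgebra A]

def oneg (a : A) : A := ⊤ ⊖ a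

def oplus (a b : A) : A := oneg (oneg a ⊖ b)

def IsPrimeIdeal (x : Set A) : Prop :=
  x.Nonempty ∧ (∀ a b : A, a ≤ b → b ∈ x → a ∈ x) ∧
    (∀ a b : A, a ∈ x → b ∈ x → a ⊔ b ∈ x) ∧ x ≠ Set.univ ∧
    (∀ a b : A, a ⊓ b ∈ x → a ∈ x ∨ b ∈ x)

def ineg (x : Set A) : Set A := {a | oneg a ∉ x}

def domPlus (x y : Set A) : Prop := y ⊆ ineg x

def pplus (x y : Set A) : Set A := {a | ∃ b ∈ y, a ⊖ b ∈ x}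

def domStar (x y : Set A) : Prop := ¬ ineg x ⊆ y

def pstar (x y : Set A) : Set A := {a | ∀ b ∉ y, a ⊖ b ∈ x}

lemma om_mono_left {a b : A} (c : A) (h : a ≤ b) : a ⊖ c ≤ b ⊖ c := by
  have h2 : (a ⊔ b) ⊖ c = (a ⊖ c) ⊔ (b ⊖ c) := OminusAlgebra.sup_ominus a b c
  rw [sup_eq_right.mpr h] at h2
  calc a ⊖ c ≤ (a ⊖ c) ⊔ (b ⊖ c) := le_sup_left
    _ = b ⊖ c := h2.symm

lemma om_anti_right (a : A) {b c : A} (h : b ≤ c) : a ⊖ c ≤ a ⊖ b := by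
  have h2 : a ⊖ (b ⊔ c) = (a ⊖ b) ⊓ (a ⊖ c) := OminusAlgebra.ominus_sup a b c
  rw [sup_eq_right.mpr h] at h2
  calc a ⊖ c = (a ⊖ b) ⊓ (a ⊖ c) := h2
    _ ≤ a ⊖ b := inf_le_left

lemma bot_mem_of_prime {x : Set A} (hx : IsPrimeIdeal x) : (⊥ : A) ∈ x := by
  obtain ⟨⟨a, ha⟩, hdown, -⟩ := hx
  exact hdown ⊥ a bot_le ha

lemma top_not_mem_of_prime {x : Set A} (hx : IsPrimeIdeal x) : (⊤ : A) ∉ x := by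
  intro h
  obtain ⟨-, hdown, -, hne, -⟩ := hx
  exact hne (Set.eq_univ_of_forall fun a => hdown a ⊤ le_top h)

/-- Core construction: if `a ⊖ b ∉ x`, there is a prime ideal `w` containing `b`,
with `w ⊆ ineg x`, such that `a ∉ pplus x w`. -/
lemma core {x : Set A} (hx : IsPrimeIdeal x) (a b : A) (hab : a ⊖ b ∉ x) :
    ∃ w : Set A, IsPrimeIdeal w ∧ domPlus x w ∧ b ∈ w ∧ a ∉ pplus x w := by
  have hbotx : (⊥ : A) ∈ x := bot_mem_of_prime hx
  obtain ⟨-, hdown, hsup, -, hprime⟩ := id hx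
  -- The filter generated by {s | a ⊖ s ∈ x} ∪ {t | ⊤ ⊖ t ∈ x}
  set G : Set A := {c | ∃ s t : A, a ⊖ s ∈ x ∧ ⊤ ⊖ t ∈ x ∧ s ⊓ t ≤ c} with hG
  have htopG : (⊤ : A) ∈ G := by
    exact ⟨⊤, ⊤, by rw [OminusAlgebra.ominus_top]; exact hbotx,
      by rw [OminusAlgebra.ominus_top]; exact hbotx, le_top⟩
  -- G as a PFilter
  let F : Order.PFilter A :=
    ⟨{ carrier := (G : Set Aᵒᵈ)
       lower' := by
         rintro c d hdc ⟨s, t, hs, ht, hst⟩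
         exact ⟨s, t, hs, ht, le_trans hst hdc⟩
       nonempty' := ⟨OrderDual.toDual (⊤ : A), htopG⟩
       directed' := by
         rintro c ⟨s1, t1, hs1, ht1, hst1⟩ d ⟨s2, t2, hs2, ht2, hst2⟩
         refine ⟨OrderDual.toDual ((OrderDual.ofDual c) ⊓ (OrderDual.ofDual d)),
           ⟨s1 ⊓ s2, t1 ⊓ t2, ?_, ?_, ?_⟩, ?_, ?_⟩
         · rw [OminusAlgebra.ominus_inf]; exact hsup _ _ hs1 hs2
         · rw [OminusAlgebra.ominus_inf]; exact hsup _ _ ht1 ht2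
         · have h1 : (s1 ⊓ s2) ⊓ (t1 ⊓ t2) ≤ s1 ⊓ t1 :=
             le_inf (le_trans inf_le_left inf_le_left) (le_trans inf_le_right inf_le_left)
           have h2 : (s1 ⊓ s2) ⊓ (t1 ⊓ t2) ≤ s2 ⊓ t2 :=
             le_inf (le_trans inf_le_left inf_le_right) (le_trans inf_le_right inf_le_right)
           exact le_inf (le_trans h1 hst1) (le_trans h2 hst2)
         · exact inf_le_left
         · exact inf_le_right }⟩
  have hmemF : ∀ c : A, c ∈ F ↔ c ∈ G := fun c => Iff.rfl
  -- disjointness of F from the principal ideal on b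
  have hdisj : Disjoint (F : Set A) ((Order.Ideal.principal b : Order.Ideal A) : Set A) := by
    rw [Set.disjoint_left]
    rintro c ⟨s, t, hs, ht, hst⟩ hcb
    have hcb' : c ≤ b := hcb
    apply hab
    have h1 : a ⊖ b ≤ a ⊖ (s ⊓ t) := om_anti_right a (le_trans hst hcb')
    rw [OminusAlgebra.ominus_inf] at h1
    have hat : a ⊖ t ∈ x := hdown _ _ (om_mono_left t le_top) ht
    exact hdown _ _ h1 (hsup _ _ hs hat)
  obtain ⟨J, hJprime, hJI, hJdisj⟩ :=
    DistribLattice.prime_ideal_of_disjoint_filter_ideal (F := F)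
      (I := Order.Ideal.principal b) hdisj
  have hbJ : b ∈ J := hJI Order.Ideal.mem_principal_self
  have hJG : ∀ c ∈ (J : Set A), c ∉ G := by
    intro c hc hcG
    exact Set.disjoint_left.mp hJdisj hcG hc
  refine ⟨(J : Set A), ⟨⟨b, hbJ⟩, fun a b hab hb => J.lower hab hb,
      fun a b ha hb => Order.Ideal.sup_mem ha hb, ?_, fun a b h => hJprime.mem_or_mem h⟩,
      ?_, hbJ, ?_⟩
  · intro h
    have : (⊤ : A) ∈ (J : Set A) := by rw [h]; trivial
    exact hJG ⊤ this htopG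
  · intro c hc hnc
    refine hJG c hc ⟨⊤, c, ?_, hnc, inf_le_right⟩
    rw [OminusAlgebra.ominus_top]; exact hbotx
  · rintro ⟨c, hc, hac⟩
    exact hJG c hc ⟨c, ⊤, hac, by rw [OminusAlgebra.ominus_top]; exact hbotx, inf_le_left⟩

theorem stmt5 {A : Type*} [OminusAlgebra A] (x y : Set A)
    (hx : IsPrimeIdeal x) (hy : IsPrimeIdeal y) (hdom : domStar x y) :
    (∀ w : Set A, IsPrimeIdeal w → domPlus x w → ¬ w ⊆ y → pstar x y ⊆ pplus x w) ∧
    (∀ z : Set A, IsPrimeIdeal z →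
      (∀ w : Set A, IsPrimeIdeal w → domPlus x w → ¬ w ⊆ y → z ⊆ pplus x w) →
      z ⊆ pstar x y) ∧
    pstar x y = ⋂ w ∈ {w : Set A | IsPrimeIdeal w ∧ domPlus x w ∧ ¬ w ⊆ y}, pplus x w := by
  have part1 : ∀ w : Set A, IsPrimeIdeal w → domPlus x w → ¬ w ⊆ y →
      pstar x y ⊆ pplus x w := by
    intro w hw hdw hwy a ha
    obtain ⟨b, hbw, hby⟩ := Set.not_subset.mp hwy
    exact ⟨b, hbw, ha b hby⟩
  have key : ∀ a : A, (∀ w : Set A, IsPrimeIdeal w → domPlus x w → ¬ w ⊆ y →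
      a ∈ pplus x w) → a ∈ pstar x y := by
    intro a ha b hby
    by_contra hab
    obtain ⟨w, hw, hdw, hbw, haw⟩ := core hx a b hab
    exact haw (ha w hw hdw (fun h => hby (h hbw)))
  refine ⟨part1, fun z hz hzw a haz => key a fun w hw hdw hwy => hzw w hw hdw hwy haz, ?_⟩
  apply Set.Subset.antisymm
  · intro a ha
    simp only [Set.mem_iInter, Set.mem_setOf_eq]
    rintro w ⟨hw, hdw, hwy⟩
    exact part1 w hw hdw hwy ha
  · intro a ha
    simp only [Set.mem_iInter, Set.mem_setOf_eq] at ha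
    exact key a fun w hw hdw hwy => ha w ⟨hw, hdw, hwy⟩
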